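/- arXiv:2407.16070 — 2 statements merged into one kernel-verified Lean document; each statement's English description precedes it below -/
import Mathlib

section
/- Let R be a reduced crystallographic root system with Weyl group W, a ∈ C, P = Conv(W(a)), F_i = Conv(W_{[n]∖{i}}(a)). For any i ∈ [n] and s ∈ W, the intersection F_i ∩ s(F_i) is either equal to F_i or empty. -/
open scoped InnerProductSpace

noncomputable section

structure RootSystemData (V : Type) [NormedAddCommGroup V] [InnerProductSpace ℝ V] (n : ℕ) where
  R : Set V
  α : Fin n → V
  finite : R.Finite
  root_ne_zero : ∀ β ∈ R, β ≠ (0 : V)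
  reduced : ∀ β ∈ R, ∀ t : ℝ, t • β ∈ R → t = 1 ∨ t = -1
  reflect_mem : ∀ β ∈ R, ∀ γ ∈ R, γ - (2 * ⟪γ, β⟫_ℝ / ⟪β, β⟫_ℝ) • β ∈ R
  cryst : ∀ β ∈ R, ∀ γ ∈ R, ∃ k : ℤ, 2 * ⟪γ, β⟫_ℝ / ⟪β, β⟫_ℝ = (k : ℝ)
  simple_mem : ∀ i, α i ∈ R
  indep : LinearIndependent ℝ α
  spanning : Submodule.span ℝ (Set.range α) = ⊤
  base : ∀ β ∈ R, (∃ c : Fin n → ℝ, (∀ i, 0 ≤ c i) ∧ β = ∑ i, c i • α i) ∨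
      (∃ c : Fin n → ℝ, (∀ i, c i ≤ 0) ∧ β = ∑ i, c i • α i)

namespace RootSystemData

variable {V : Type} [NormedAddCommGroup V] [InnerProductSpace ℝ V] {n : ℕ}
variable (D : RootSystemData V n)

def coroot (i : Fin n) : V := (2 / ⟪D.α i, D.α i⟫_ℝ) • D.α i

def IsSimpleReflection (i : Fin n) (g : V ≃ₗ[ℝ] V) : Prop :=
  ∀ v, g v = v - (2 * ⟪v, D.α i⟫_ℝ / ⟪D.α i, D.α i⟫_ℝ) • D.α i

def WK (K : Set (Fin n)) : Subgroup (V ≃ₗ[ℝ] V) :=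
  Subgroup.closure {g | ∃ i ∈ K, D.IsSimpleReflection i g}

def W : Subgroup (V ≃ₗ[ℝ] V) := D.WK Set.univ

def C : Set V := {x | ∀ i, 0 < ⟪x, D.α i⟫_ℝ}

def closedC : Set V := {x | ∀ i, 0 ≤ ⟪x, D.α i⟫_ℝ}

def orbit (K : Set (Fin n)) (a : V) : Set V := {x | ∃ g ∈ D.WK K, g a = x}

def F (a : V) (i : Fin n) : Set V := convexHull ℝ (D.orbit {i}ᶜ a)

def P (a : V) : Set V := convexHull ℝ (D.orbit Set.univ a)

def H (i : Fin n) : Set V := {x | ⟪x, D.α i⟫_ℝ = 0}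

end RootSystemData


namespace RootSystemData

variable {V : Type} [NormedAddCommGroup V] [InnerProductSpace ℝ V] {n : ℕ}
variable (D : RootSystemData V n)

/-- The basis of simple roots. -/
def bas : Module.Basis (Fin n) ℝ V := Module.Basis.mk D.indep (by rw [D.spanning])

lemma bas_apply (j : Fin n) : D.bas j = D.α j := by
  rw [bas, Module.Basis.coe_mk]

lemma alpha_ne_zero (j : Fin n) : D.α j ≠ 0 := D.root_ne_zero _ (D.simple_mem j)

lemma inner_alpha_pos (j : Fin n) : 0 < ⟪D.α j, D.α j⟫_ℝ :=
  lt_of_le_of_ne real_inner_self_nonneg (Ne.symm (inner_self_ne_zero.2 (D.alpha_ne_zero j)))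

lemma inner_alpha_ne (j : Fin n) : ⟪D.α j, D.α j⟫_ℝ ≠ 0 := (D.inner_alpha_pos j).ne'

/-- Simple reflection as a linear map. -/
def srefL (j : Fin n) : V →ₗ[ℝ] V where
  toFun v := v - (2 * ⟪v, D.α j⟫_ℝ / ⟪D.α j, D.α j⟫_ℝ) • D.α j
  map_add' u v := by
    show u + v - (2 * ⟪u + v, D.α j⟫_ℝ / ⟪D.α j, D.α j⟫_ℝ) • D.α j = _
    have h : 2 * ⟪u + v, D.α j⟫_ℝ / ⟪D.α j, D.α j⟫_ℝ
        = 2 * ⟪u, D.α j⟫_ℝ / ⟪D.α j, D.α j⟫_ℝ + 2 * ⟪v, D.α j⟫_ℝ / ⟪D.α j, D.α j⟫_ℝ := by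
      rw [inner_add_left]; ring
    rw [h, add_smul]; abel
  map_smul' c v := by
    show c • v - (2 * ⟪c • v, D.α j⟫_ℝ / ⟪D.α j, D.α j⟫_ℝ) • D.α j = _
    have h : 2 * ⟪c • v, D.α j⟫_ℝ / ⟪D.α j, D.α j⟫_ℝ
        = c * (2 * ⟪v, D.α j⟫_ℝ / ⟪D.α j, D.α j⟫_ℝ) := by
      rw [real_inner_smul_left]; ring
    simp only [RingHom.id_apply, h, smul_sub, smul_smul]

lemma srefL_invol (j : Fin n) : Function.Involutive (D.srefL j) := by
  intro v
  have hA := D.inner_alpha_ne j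
  have h1 : ⟪D.srefL j v, D.α j⟫_ℝ = -⟪v, D.α j⟫_ℝ := by
    show ⟪v - _ • D.α j, D.α j⟫_ℝ = _
    rw [inner_sub_left, real_inner_smul_left]
    field_simp
    ring
  show D.srefL j v - (2 * ⟪D.srefL j v, D.α j⟫_ℝ / ⟪D.α j, D.α j⟫_ℝ) • D.α j = v
  rw [h1]
  show v - (2 * ⟪v, D.α j⟫_ℝ / ⟪D.α j, D.α j⟫_ℝ) • D.α j
      - (2 * -⟪v, D.α j⟫_ℝ / ⟪D.α j, D.α j⟫_ℝ) • D.α j = v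
  have h2 : 2 * -⟪v, D.α j⟫_ℝ / ⟪D.α j, D.α j⟫_ℝ
      = -(2 * ⟪v, D.α j⟫_ℝ / ⟪D.α j, D.α j⟫_ℝ) := by ring
  rw [h2, neg_smul]; abel

/-- Simple reflection as a linear equivalence. -/
def sref (j : Fin n) : V ≃ₗ[ℝ] V := LinearEquiv.ofInvolutive (D.srefL j) (D.srefL_invol j)

lemma sref_apply (j : Fin n) (v : V) :
    D.sref j v = v - (2 * ⟪v, D.α j⟫_ℝ / ⟪D.α j, D.α j⟫_ℝ) • D.α j := rfl

lemma sref_sref (j : Fin n) (v : V) : D.sref j (D.sref j v) = v := D.srefL_invol j v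

lemma sref_isSimple (j : Fin n) : D.IsSimpleReflection j (D.sref j) := fun _ => rfl

lemma eq_sref {j : Fin n} {g : V ≃ₗ[ℝ] V} (h : D.IsSimpleReflection j g) : g = D.sref j := by
  apply LinearEquiv.ext
  intro v
  exact h v

lemma sref_mul_self (j : Fin n) : D.sref j * D.sref j = 1 := by
  apply LinearEquiv.ext
  intro v
  exact D.sref_sref j v

lemma sref_inv (j : Fin n) : (D.sref j)⁻¹ = D.sref j :=
  inv_eq_of_mul_eq_one_right (D.sref_mul_self j)

lemma sref_inner (j : Fin n) (u v : V) : ⟪D.sref j u, D.sref j v⟫_ℝ = ⟪u, v⟫_ℝ := by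
  have hA := D.inner_alpha_ne j
  rw [sref_apply, sref_apply]
  simp only [inner_sub_left, inner_sub_right, real_inner_smul_left, real_inner_smul_right]
  rw [real_inner_comm (D.α j) v]
  field_simp
  ring

lemma sref_alpha_self (j : Fin n) : D.sref j (D.α j) = -D.α j := by
  have hA := D.inner_alpha_ne j
  rw [sref_apply]
  rw [mul_div_assoc, div_self hA, mul_one, two_smul]
  abel

lemma sref_fix {j : Fin n} {v : V} (h : ⟪v, D.α j⟫_ℝ = 0) : D.sref j v = v := by
  rw [sref_apply, h]
  simp

end RootSystemData

namespace RootSystemData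

variable {V : Type} [NormedAddCommGroup V] [InnerProductSpace ℝ V] {n : ℕ}
variable (D : RootSystemData V n)

/-- Product of simple reflections along a word. -/
def wl (l : List (Fin n)) : V ≃ₗ[ℝ] V := (l.map D.sref).prod

lemma wl_nil : D.wl ([] : List (Fin n)) = 1 := rfl

lemma wl_cons (j : Fin n) (l : List (Fin n)) : D.wl (j :: l) = D.sref j * D.wl l := by
  simp [wl]

lemma wl_append (l1 l2 : List (Fin n)) : D.wl (l1 ++ l2) = D.wl l1 * D.wl l2 := by
  simp [wl]

lemma wl_singleton (j : Fin n) : D.wl [j] = D.sref j := by simp [wl]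

lemma wl_reverse (l : List (Fin n)) : D.wl l.reverse = (D.wl l)⁻¹ := by
  induction l with
  | nil => simp [wl_nil]
  | cons j l ih =>
    rw [List.reverse_cons, wl_append, ih, wl_singleton, wl_cons, mul_inv_rev, sref_inv]

lemma sref_mem_W (j : Fin n) : D.sref j ∈ D.W :=
  Subgroup.subset_closure ⟨j, Set.mem_univ j, D.sref_isSimple j⟩

lemma wl_mem_W (l : List (Fin n)) : D.wl l ∈ D.W := by
  induction l with
  | nil => exact one_mem _
  | cons j l ih => rw [wl_cons]; exact mul_mem (D.sref_mem_W j) ih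

lemma exists_word {g : V ≃ₗ[ℝ] V} (hg : g ∈ D.W) : ∃ l : List (Fin n), g = D.wl l := by
  induction hg using Subgroup.closure_induction with
  | mem g hg =>
    obtain ⟨j, -, hj⟩ := hg
    exact ⟨[j], by rw [D.eq_sref hj, wl_singleton]⟩
  | one => exact ⟨[], rfl⟩
  | mul g h _ _ ih1 ih2 =>
    obtain ⟨l1, rfl⟩ := ih1
    obtain ⟨l2, rfl⟩ := ih2
    exact ⟨l1 ++ l2, (D.wl_append l1 l2).symm⟩
  | inv g _ ih =>
    obtain ⟨l, rfl⟩ := ih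
    exact ⟨l.reverse, (D.wl_reverse l).symm⟩

lemma wl_inner (l : List (Fin n)) (u v : V) : ⟪D.wl l u, D.wl l v⟫_ℝ = ⟪u, v⟫_ℝ := by
  induction l with
  | nil => rfl
  | cons j l ih =>
    rw [wl_cons]
    show ⟪D.sref j (D.wl l u), D.sref j (D.wl l v)⟫_ℝ = _
    rw [sref_inner, ih]

lemma mem_W_inner {g : V ≃ₗ[ℝ] V} (hg : g ∈ D.W) (u v : V) : ⟪g u, g v⟫_ℝ = ⟪u, v⟫_ℝ := by
  obtain ⟨l, rfl⟩ := D.exists_word hg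
  exact D.wl_inner l u v

lemma sref_mem_R {j : Fin n} {β : V} (hβ : β ∈ D.R) : D.sref j β ∈ D.R :=
  D.reflect_mem _ (D.simple_mem j) _ hβ

lemma wl_mem_R (l : List (Fin n)) {β : V} (hβ : β ∈ D.R) : D.wl l β ∈ D.R := by
  induction l with
  | nil => exact hβ
  | cons j l ih =>
    rw [wl_cons]
    exact D.sref_mem_R ih

lemma mem_W_R {g : V ≃ₗ[ℝ] V} (hg : g ∈ D.W) {β : V} (hβ : β ∈ D.R) : g β ∈ D.R := by
  obtain ⟨l, rfl⟩ := D.exists_word hg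
  exact D.wl_mem_R l hβ

/-- Positivity (nonnegative coordinates in the simple-root basis, as an existential). -/
def Pos (v : V) : Prop := ∃ c : Fin n → ℝ, (∀ k, 0 ≤ c k) ∧ v = ∑ k, c k • D.α k

def Neg' (v : V) : Prop := ∃ c : Fin n → ℝ, (∀ k, c k ≤ 0) ∧ v = ∑ k, c k • D.α k

lemma repr_of_sum {v : V} {c : Fin n → ℝ} (h : v = ∑ k, c k • D.α k) :
    ⇑(D.bas.repr v) = c := by
  have h2 : v = ∑ k, c k • D.bas k := by
    rw [h]
    congr 1
    ext k
    rw [bas_apply]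
  rw [h2, Module.Basis.repr_sum_self]

lemma pos_repr {v : V} (h : D.Pos v) : ∀ k, 0 ≤ D.bas.repr v k := by
  obtain ⟨c, hc, rfl⟩ := h
  intro k
  rw [D.repr_of_sum rfl]
  exact hc k

lemma neg_repr {v : V} (h : D.Neg' v) : ∀ k, D.bas.repr v k ≤ 0 := by
  obtain ⟨c, hc, rfl⟩ := h
  intro k
  rw [D.repr_of_sum rfl]
  exact hc k

lemma pos_of_repr {v : V} (h : ∀ k, 0 ≤ D.bas.repr v k) : D.Pos v := by
  refine ⟨fun k => D.bas.repr v k, h, ?_⟩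
  conv_lhs => rw [← D.bas.sum_repr v]
  congr 1
  ext k
  rw [bas_apply]

lemma pos_or_neg {β : V} (hβ : β ∈ D.R) : D.Pos β ∨ D.Neg' β := D.base β hβ

lemma eq_zero_of_pos_neg {v : V} (h1 : D.Pos v) (h2 : D.Neg' v) : v = 0 := by
  obtain ⟨c, hc, rfl⟩ := h1
  have hrepr := D.neg_repr h2
  have : ∀ k, c k = 0 := by
    intro k
    have := hrepr k
    rw [D.repr_of_sum rfl] at this
    exact le_antisymm this (hc k)
  simp [this]

lemma not_neg_of_pos {β : V} (hβ : β ∈ D.R) (h : D.Pos β) : ¬ D.Neg' β :=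
  fun h2 => D.root_ne_zero β hβ (D.eq_zero_of_pos_neg h h2)

lemma neg_iff_pos_neg {v : V} : D.Neg' v ↔ D.Pos (-v) := by
  constructor
  · rintro ⟨c, hc, rfl⟩
    exact ⟨fun k => -c k, fun k => neg_nonneg.2 (hc k), by rw [← Finset.sum_neg_distrib]; simp⟩
  · rintro ⟨c, hc, h⟩
    refine ⟨fun k => -c k, fun k => neg_nonpos.2 (hc k), ?_⟩
    have : v = -∑ k, c k • D.α k := by rw [← h]; simp
    rw [this, ← Finset.sum_neg_distrib]
    simp

lemma pos_alpha (j : Fin n) : D.Pos (D.α j) := by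
  refine ⟨fun k => if k = j then 1 else 0, fun k => by positivity, ?_⟩
  simp [Finset.sum_ite_eq']

end RootSystemData

namespace RootSystemData

variable {V : Type} [NormedAddCommGroup V] [InnerProductSpace ℝ V] {n : ℕ}
variable (D : RootSystemData V n)

lemma inner_left_neg_of_neg {β x : V} (hx : x ∈ D.C) (hβ0 : β ≠ 0) (h : D.Neg' β) :
    ⟪β, x⟫_ℝ < 0 := by
  obtain ⟨c, hc, rfl⟩ := h
  rw [sum_inner]
  have hterm : ∀ k, ⟪c k • D.α k, x⟫_ℝ = c k * ⟪D.α k, x⟫_ℝ := fun k => real_inner_smul_left _ _ _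
  have hpos : ∀ k, 0 < ⟪D.α k, x⟫_ℝ := fun k => by
    rw [real_inner_comm]; exact hx k
  have hne : ∃ k, c k ≠ 0 := by
    by_contra hcon
    push_neg at hcon
    exact hβ0 (by simp [hcon])
  obtain ⟨k0, hk0⟩ := hne
  have hlt : ∑ k, ⟪c k • D.α k, x⟫_ℝ < ∑ k : Fin n, (0 : ℝ) := by
    apply Finset.sum_lt_sum
    · intro k _
      rw [hterm]
      exact mul_nonpos_iff.2 (Or.inr ⟨hc k, (hpos k).le⟩)
    · refine ⟨k0, Finset.mem_univ k0, ?_⟩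
      rw [hterm]
      exact mul_neg_of_neg_of_pos (lt_of_le_of_ne (hc k0) hk0) (hpos k0)
  simpa using hlt

lemma inner_right_nonpos_of_neg {β x : V} (hx : x ∈ D.closedC) (h : D.Neg' β) :
    ⟪x, β⟫_ℝ ≤ 0 := by
  obtain ⟨c, hc, rfl⟩ := h
  rw [inner_sum]
  apply Finset.sum_nonpos
  intro k _
  rw [real_inner_smul_right]
  exact mul_nonpos_iff.2 (Or.inr ⟨hc k, hx k⟩)

/-- A simple reflection permutes the positive roots other than its own root. -/
lemma sref_pos_of_ne {j : Fin n} {β : V} (hβ : β ∈ D.R) (hp : D.Pos β) (hne : β ≠ D.α j) :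
    D.Pos (D.sref j β) := by
  have hmem : D.sref j β ∈ D.R := D.sref_mem_R hβ
  rcases D.pos_or_neg hmem with h | h
  · exact h
  exfalso
  -- coordinates of sref j β away from j agree with those of β
  have hrepr : ∀ k, k ≠ j → D.bas.repr β k = 0 := by
    intro k hk
    have h1 : D.bas.repr (D.sref j β) k = D.bas.repr β k := by
      rw [sref_apply, map_sub, map_smul]
      have : D.bas.repr (D.α j) k = 0 := by
        rw [← bas_apply, Module.Basis.repr_self]
        exact Finsupp.single_eq_of_ne hk
      simp [this]
    have hle := D.neg_repr h k
    rw [h1] at hle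
    exact le_antisymm hle (D.pos_repr hp k)
  have hβeq : β = D.bas.repr β j • D.α j := by
    conv_lhs => rw [← D.bas.sum_repr β]
    rw [Finset.sum_eq_single j]
    · rw [bas_apply]
    · intro k _ hk
      rw [hrepr k hk, zero_smul]
    · intro hj
      exact absurd (Finset.mem_univ j) hj
  have hmemβ : D.bas.repr β j • D.α j ∈ D.R := hβeq ▸ hβ
  rcases D.reduced (D.α j) (D.simple_mem j) _ hmemβ with h1 | h1
  · rw [h1, one_smul] at hβeq
    exact hne hβeq
  · have := D.pos_repr hp j
    rw [h1] at this
    linarith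

/-- The inversion set. -/
def Nset (g : V ≃ₗ[ℝ] V) : Set V := {β | β ∈ D.R ∧ D.Pos β ∧ D.Neg' (g β)}

lemma Nset_finite (g : V ≃ₗ[ℝ] V) : (D.Nset g).Finite :=
  D.finite.subset (fun _ h => h.1)

def nn (g : V ≃ₗ[ℝ] V) : ℕ := (D.Nset g).ncard

lemma nn_lt {g : V ≃ₗ[ℝ] V} {j : Fin n} (hneg : D.Neg' (g (D.α j))) :
    D.nn (g * D.sref j) < D.nn g := by
  have hmemj : D.α j ∈ D.Nset g := ⟨D.simple_mem j, D.pos_alpha j, hneg⟩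
  have himg : D.sref j '' D.Nset (g * D.sref j) ⊆ D.Nset g \ {D.α j} := by
    rintro x ⟨β, ⟨hβR, hβP, hβN⟩, rfl⟩
    have hβne : β ≠ D.α j := by
      rintro rfl
      have h1 : (g * D.sref j) (D.α j) = -(g (D.α j)) := by
        show g (D.sref j (D.α j)) = _
        rw [sref_alpha_self, map_neg]
      rw [h1] at hβN
      have h2 : D.Pos (-(g (D.α j))) := D.neg_iff_pos_neg.1 hneg
      have h3 : -(g (D.α j)) = 0 := D.eq_zero_of_pos_neg h2 hβN
      have h4 : g (D.α j) = 0 := by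
        rw [← neg_neg (g (D.α j)), h3, neg_zero]
      have h5 : D.α j = 0 := by
        have := congrArg g.symm h4
        simpa using this
      exact D.alpha_ne_zero j h5
    refine ⟨⟨D.sref_mem_R hβR, D.sref_pos_of_ne hβR hβP hβne, ?_⟩, ?_⟩
    · have : g (D.sref j β) = (g * D.sref j) β := rfl
      rw [this]
      exact hβN
    · intro hcon
      have hcon' : D.sref j β = D.α j := hcon
      have : β = -D.α j := by
        have := congrArg (D.sref j) hcon'
        rw [sref_sref, sref_alpha_self] at this
        exact this
      rw [this] at hβP
      have : D.Neg' (D.α j) := by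
        rw [neg_iff_pos_neg]
        simpa using hβP
      exact D.not_neg_of_pos (D.simple_mem j) (D.pos_alpha j) this
  have hinj : Function.Injective (D.sref j) := (D.sref j).injective
  calc D.nn (g * D.sref j) = (D.sref j '' D.Nset (g * D.sref j)).ncard :=
        (Set.ncard_image_of_injective _ hinj).symm
    _ ≤ (D.Nset g \ {D.α j}).ncard :=
        Set.ncard_le_ncard himg ((D.Nset_finite g).diff)
    _ < (D.Nset g).ncard :=
        Set.ncard_diff_singleton_lt_of_mem hmemj (D.Nset_finite g)

/-- If a word sends a positive root to a negative root, some suffix sends it to a simple root. -/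
lemma word_exchange : ∀ (l : List (Fin n)) (β : V), β ∈ D.R → D.Pos β →
    D.Neg' (D.wl l β) → ∃ (l1 : List (Fin n)) (j : Fin n) (l2 : List (Fin n)),
      l = l1 ++ j :: l2 ∧ D.wl l2 β = D.α j := by
  intro l
  induction l with
  | nil =>
    intro β hβR hβP hβN
    exact absurd hβN (D.not_neg_of_pos hβR hβP)
  | cons j l ih =>
    intro β hβR hβP hβN
    by_cases hv : D.Neg' (D.wl l β)
    · obtain ⟨l1, j', l2, h1, h2⟩ := ih β hβR hβP hv
      exact ⟨j :: l1, j', l2, by rw [h1]; rfl, h2⟩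
    · have hvR : D.wl l β ∈ D.R := D.wl_mem_R l hβR
      have hvP : D.Pos (D.wl l β) := (D.pos_or_neg hvR).resolve_right hv
      have hN : D.Neg' (D.sref j (D.wl l β)) := by
        have : D.wl (j :: l) β = D.sref j (D.wl l β) := by rw [wl_cons]; rfl
        rwa [this] at hβN
      by_cases hne : D.wl l β = D.α j
      · exact ⟨[], j, l, rfl, hne⟩
      · exfalso
        have := D.sref_pos_of_ne hvR hvP hne
        exact D.not_neg_of_pos (D.sref_mem_R hvR) this hN

/-- Conjugation: if a word sends `α m` to `α j`, the corresponding reflections are conjugate. -/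
lemma conj_word {l : List (Fin n)} {j m : Fin n} (h : D.wl l (D.α m) = D.α j) :
    D.sref j * D.wl l = D.wl l * D.sref m := by
  apply LinearEquiv.ext
  intro v
  show D.sref j (D.wl l v) = D.wl l (D.sref m v)
  rw [sref_apply, sref_apply, map_sub, map_smul, h]
  congr 3
  · rw [← h, wl_inner]
  · rw [← h, wl_inner]

end RootSystemData

namespace RootSystemData

variable {V : Type} [NormedAddCommGroup V] [InnerProductSpace ℝ V] {n : ℕ}
variable (D : RootSystemData V n)

lemma pos_map {g : V ≃ₗ[ℝ] V} (hg : ∀ j, D.Pos (g (D.α j))) {v : V} (hv : D.Pos v) :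
    D.Pos (g v) := by
  obtain ⟨c, hc, rfl⟩ := hv
  choose d hd hsum using hg
  refine ⟨fun m => ∑ k, c k * d k m, fun m => Finset.sum_nonneg fun k _ =>
    mul_nonneg (hc k) (hd k m), ?_⟩
  rw [map_sum]
  calc ∑ k, g (c k • D.α k) = ∑ k, ∑ m, (c k * d k m) • D.α m := by
        apply Finset.sum_congr rfl
        intro k _
        rw [map_smul, hsum k, Finset.smul_sum]
        apply Finset.sum_congr rfl
        intro m _
        rw [smul_smul]
    _ = ∑ m, (∑ k, c k * d k m) • D.α m := by
        rw [Finset.sum_comm]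
        apply Finset.sum_congr rfl
        intro m _
        rw [Finset.sum_smul]

/-- A word preserving positivity of roots is the identity. -/
lemma word_eq_one : ∀ (k : ℕ) (l : List (Fin n)), l.length ≤ k →
    (∀ β ∈ D.R, D.Pos β → D.Pos (D.wl l β)) → D.wl l = 1 := by
  intro k
  induction k with
  | zero =>
    intro l hl _
    have : l = [] := List.eq_nil_of_length_eq_zero (Nat.le_zero.1 hl)
    rw [this, wl_nil]
  | succ k ih =>
    intro l hl hpos
    rcases List.eq_nil_or_concat l with rfl | ⟨L, m, rfl⟩
    · rw [wl_nil]
    · have hLlen : L.length + 1 ≤ k + 1 := by simpa using hl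
      have hconcat : D.wl (L.concat m) = D.wl L * D.sref m := by
        rw [List.concat_eq_append, wl_append, wl_singleton]
      have hneg : D.Neg' (D.wl L (D.α m)) := by
        have h1 : D.Pos (D.wl (L.concat m) (D.α m)) :=
          hpos _ (D.simple_mem m) (D.pos_alpha m)
        have h2 : D.wl (L.concat m) (D.α m) = -(D.wl L (D.α m)) := by
          rw [hconcat]
          show D.wl L (D.sref m (D.α m)) = _
          rw [sref_alpha_self, map_neg]
        rw [h2] at h1
        rw [neg_iff_pos_neg]
        exact h1
      obtain ⟨l1, j, l2, hLeq, hl2⟩ := D.word_exchange L (D.α m) (D.simple_mem m)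
        (D.pos_alpha m) hneg
      have hconj := D.conj_word hl2
      have hshort : D.wl (L.concat m) = D.wl (l1 ++ l2) := by
        rw [hconcat, hLeq, wl_append, wl_cons, wl_append]
        rw [mul_assoc (D.wl l1), hconj]
        rw [mul_assoc (D.wl l2), sref_mul_self, mul_one]
      have hlen2 : (l1 ++ l2).length ≤ k := by
        have : L.length = l1.length + l2.length + 1 := by
          rw [hLeq]; simp; omega
        simp only [List.length_append]
        omega
      have := ih (l1 ++ l2) hlen2 (by
        intro β hβ hp
        rw [← hshort]
        exact hpos β hβ hp)
      rw [hshort, this]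

/-- Key theorem: an element of `W` fixing a closed-chamber point lies in the parabolic. -/
lemma stab_theorem : ∀ (k : ℕ) (g : V ≃ₗ[ℝ] V), g ∈ D.W → D.nn g ≤ k →
    ∀ ν ∈ D.closedC, g ν ∈ D.closedC →
      g ν = ν ∧ g ∈ D.WK {j | ⟪ν, D.α j⟫_ℝ = 0} := by
  intro k
  induction k with
  | zero =>
    intro g hg hnn ν hν hgν
    by_cases hex : ∃ j, D.Neg' (g (D.α j))
    · exfalso
      obtain ⟨j, hj⟩ := hex
      have : 0 < D.nn g := (Set.ncard_pos (D.Nset_finite g)).2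
        ⟨D.α j, D.simple_mem j, D.pos_alpha j, hj⟩
      omega
    · push_neg at hex
      have hpos : ∀ j, D.Pos (g (D.α j)) := fun j =>
        (D.pos_or_neg (D.mem_W_R hg (D.simple_mem j))).resolve_right (hex j)
      obtain ⟨l, rfl⟩ := D.exists_word hg
      have h1 : D.wl l = 1 := D.word_eq_one l.length l le_rfl
        (fun β hβ hp => D.pos_map hpos hp)
      rw [h1]
      exact ⟨rfl, one_mem _⟩
  | succ k ih =>
    intro g hg hnn ν hν hgν
    by_cases hex : ∃ j, D.Neg' (g (D.α j))
    · obtain ⟨j, hj⟩ := hex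
      have h0 : ⟪ν, D.α j⟫_ℝ = 0 := by
        have hle : ⟪g ν, g (D.α j)⟫_ℝ ≤ 0 :=
          D.inner_right_nonpos_of_neg hgν hj
        rw [D.mem_W_inner hg] at hle
        exact le_antisymm hle (hν j)
      have hfix : D.sref j ν = ν := D.sref_fix h0
      have hg' : g * D.sref j ∈ D.W := mul_mem hg (D.sref_mem_W j)
      have hnn' : D.nn (g * D.sref j) ≤ k := by
        have := D.nn_lt hj
        omega
      have hgν' : (g * D.sref j) ν = g ν := by
        show g (D.sref j ν) = g ν
        rw [hfix]
      obtain ⟨heq, hmem⟩ := ih (g * D.sref j) hg' hnn' ν hν (by rw [hgν']; exact hgν)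
      rw [hgν'] at heq
      refine ⟨heq, ?_⟩
      have hsj : D.sref j ∈ D.WK {j' | ⟪ν, D.α j'⟫_ℝ = 0} :=
        Subgroup.subset_closure ⟨j, h0, D.sref_isSimple j⟩
      have : g = (g * D.sref j) * D.sref j := by
        rw [mul_assoc, sref_mul_self, mul_one]
      rw [this]
      exact mul_mem hmem hsj
    · push_neg at hex
      have hpos : ∀ j, D.Pos (g (D.α j)) := fun j =>
        (D.pos_or_neg (D.mem_W_R hg (D.simple_mem j))).resolve_right (hex j)
      obtain ⟨l, rfl⟩ := D.exists_word hg
      have h1 : D.wl l = 1 := D.word_eq_one l.length l le_rfl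
        (fun β hβ hp => D.pos_map hpos hp)
      rw [h1]
      exact ⟨rfl, one_mem _⟩

/-- Key inequality: for dominant ω and regular dominant a, ⟪gω, a⟫ ≤ ⟪ω, a⟫ with equality
only when gω = ω. -/
lemma orbit_max : ∀ (k : ℕ) (g : V ≃ₗ[ℝ] V), g ∈ D.W → D.nn g ≤ k →
    ∀ (a : V), a ∈ D.C → ∀ (ω : V), ω ∈ D.closedC →
      ⟪g ω, a⟫_ℝ ≤ ⟪ω, a⟫_ℝ ∧ (⟪g ω, a⟫_ℝ = ⟪ω, a⟫_ℝ → g ω = ω) := by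
  intro k
  induction k with
  | zero =>
    intro g hg hnn a ha ω hω
    by_cases hex : ∃ j, D.Neg' (g (D.α j))
    · exfalso
      obtain ⟨j, hj⟩ := hex
      have : 0 < D.nn g := (Set.ncard_pos (D.Nset_finite g)).2
        ⟨D.α j, D.simple_mem j, D.pos_alpha j, hj⟩
      omega
    · push_neg at hex
      have hpos : ∀ j, D.Pos (g (D.α j)) := fun j =>
        (D.pos_or_neg (D.mem_W_R hg (D.simple_mem j))).resolve_right (hex j)
      obtain ⟨l, rfl⟩ := D.exists_word hg
      have h1 : D.wl l = 1 := D.word_eq_one l.length l le_rfl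
        (fun β hβ hp => D.pos_map hpos hp)
      rw [h1]
      exact ⟨le_rfl, fun _ => rfl⟩
  | succ k ih =>
    intro g hg hnn a ha ω hω
    by_cases hex : ∃ j, D.Neg' (g (D.α j))
    · obtain ⟨j, hj⟩ := hex
      set t : ℝ := 2 * ⟪ω, D.α j⟫_ℝ / ⟪D.α j, D.α j⟫_ℝ with ht
      have htnn : 0 ≤ t := div_nonneg (by
          have := hω j
          positivity) (D.inner_alpha_pos j).le
      have hg' : g * D.sref j ∈ D.W := mul_mem hg (D.sref_mem_W j)
      have hnn' : D.nn (g * D.sref j) ≤ k := by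
        have := D.nn_lt hj
        omega
      have hsplit : g ω = (g * D.sref j) ω + t • g (D.α j) := by
        show _ = g (D.sref j ω) + t • g (D.α j)
        rw [sref_apply, ← ht, map_sub, map_smul]
        abel
      have hlt : ⟪g (D.α j), a⟫_ℝ < 0 := by
        apply D.inner_left_neg_of_neg ha _ hj
        intro hzero
        exact D.alpha_ne_zero j (by
          have := congrArg g.symm hzero
          simpa using this)
      have hinner : ⟪g ω, a⟫_ℝ = ⟪(g * D.sref j) ω, a⟫_ℝ + t * ⟪g (D.α j), a⟫_ℝ := by
        rw [hsplit, inner_add_left, real_inner_smul_left]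
      obtain ⟨hle', heq'⟩ := ih (g * D.sref j) hg' hnn' a ha ω hω
      have hprod : t * ⟪g (D.α j), a⟫_ℝ ≤ 0 :=
        mul_nonpos_iff.2 (Or.inl ⟨htnn, hlt.le⟩)
      constructor
      · rw [hinner]; linarith
      · intro heq
        rw [hinner] at heq
        have h1 : ⟪(g * D.sref j) ω, a⟫_ℝ = ⟪ω, a⟫_ℝ := by linarith
        have h2 : t * ⟪g (D.α j), a⟫_ℝ = 0 := by linarith
        have ht0 : t = 0 := by
          rcases mul_eq_zero.1 h2 with h | h
          · exact h
          · exact absurd h hlt.ne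
        have hfix : D.sref j ω = ω := by
          rw [sref_apply, ← ht, ht0, zero_smul, sub_zero]
        have := heq' h1
        calc g ω = g (D.sref j ω) := by rw [hfix]
          _ = (g * D.sref j) ω := rfl
          _ = ω := this
    · push_neg at hex
      have hpos : ∀ j, D.Pos (g (D.α j)) := fun j =>
        (D.pos_or_neg (D.mem_W_R hg (D.simple_mem j))).resolve_right (hex j)
      obtain ⟨l, rfl⟩ := D.exists_word hg
      have h1 : D.wl l = 1 := D.word_eq_one l.length l le_rfl
        (fun β hβ hp => D.pos_map hpos hp)
      rw [h1]
      exact ⟨le_rfl, fun _ => rfl⟩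

end RootSystemData

namespace RootSystemData

variable {V : Type} [NormedAddCommGroup V] [InnerProductSpace ℝ V] {n : ℕ}
variable (D : RootSystemData V n)

lemma WK_le_W (K : Set (Fin n)) : D.WK K ≤ D.W := by
  apply Subgroup.closure_mono
  rintro g ⟨j, -, hj⟩
  exact ⟨j, Set.mem_univ j, hj⟩

lemma fix_of_orth {i : Fin n} {ω : V} (hω : ∀ j, j ≠ i → ⟪ω, D.α j⟫_ℝ = 0) :
    ∀ g ∈ D.WK ({i}ᶜ : Set (Fin n)), g ω = ω := by
  intro g hg
  induction hg using Subgroup.closure_induction with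
  | mem g hgm =>
    obtain ⟨j, hj, hrefl⟩ := hgm
    rw [D.eq_sref hrefl]
    exact D.sref_fix (hω j (by simpa using hj))
  | one => rfl
  | mul g h _ _ ihg ihh =>
    show g (h ω) = ω
    rw [ihh, ihg]
  | inv g _ ihg =>
    have : g⁻¹ (g ω) = ω := by
      show (g⁻¹ * g) ω = ω
      rw [inv_mul_cancel]
      rfl
    rw [ihg] at this
    exact this

end RootSystemData

/-- For any `i ∈ [n]` and `s ∈ W`, the intersection `F_i ∩ s(F_i)` is either `F_i` or empty. -/
theorem stmt_11 {V : Type} [NormedAddCommGroup V] [InnerProductSpace ℝ V] {n : ℕ}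
    (D : RootSystemData V n) (a : V) (ha : a ∈ D.C) (i : Fin n)
    (s : V ≃ₗ[ℝ] V) (hs : s ∈ D.W) :
    D.F a i ∩ ⇑s '' D.F a i = D.F a i ∨ D.F a i ∩ ⇑s '' D.F a i = ∅ := by
  classical
  haveI : FiniteDimensional ℝ V := Module.Basis.finiteDimensional_of_finite D.bas
  obtain ⟨ω, hωα⟩ : ∃ ω : V, ∀ j, ⟪ω, D.α j⟫_ℝ = if j = i then 1 else 0 := by
    refine ⟨(InnerProductSpace.toDual ℝ V).symm
      (LinearMap.toContinuousLinearMap (D.bas.coord i)), fun j => ?_⟩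
    rw [InnerProductSpace.toDual_symm_apply]
    show (LinearMap.toContinuousLinearMap (D.bas.coord i)) (D.α j) = _
    rw [LinearMap.coe_toContinuousLinearMap']
    rw [Module.Basis.coord_apply, ← D.bas_apply j, Module.Basis.repr_self]
    exact Finsupp.single_apply
  have hω0 : ∀ j, j ≠ i → ⟪ω, D.α j⟫_ℝ = 0 := fun j hj => by rw [hωα]; simp [hj]
  have hωC : ω ∈ D.closedC := fun j => by rw [hωα]; split <;> norm_num
  have hfixW : ∀ g ∈ D.WK ({i}ᶜ : Set (Fin n)), g ω = ω := D.fix_of_orth hω0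
  have hvertex : ∀ x ∈ D.orbit ({i}ᶜ) a, ⟪ω, x⟫_ℝ = ⟪ω, a⟫_ℝ := by
    rintro x ⟨g, hg, rfl⟩
    have h1 := D.mem_W_inner (inv_mem (D.WK_le_W _ hg)) ω (g a)
    have hga : g⁻¹ (g a) = a := by
      show (g⁻¹ * g) a = a
      rw [inv_mul_cancel]
      rfl
    rw [hga] at h1
    rw [← h1, hfixW g⁻¹ (inv_mem hg)]
  by_cases hcase : s ω = ω
  · left
    have hsK : s ∈ D.WK ({i}ᶜ : Set (Fin n)) := by
      have h := (D.stab_theorem (D.nn s) s hs le_rfl ω hωC (by rw [hcase]; exact hωC)).2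
      have hKeq : {j | ⟪ω, D.α j⟫_ℝ = 0} = ({i}ᶜ : Set (Fin n)) := by
        ext j
        simp only [Set.mem_setOf_eq, Set.mem_compl_iff, Set.mem_singleton_iff]
        rw [hωα]
        constructor
        · intro h0 hji
          rw [if_pos hji] at h0
          norm_num at h0
        · intro hji
          rw [if_neg hji]
      rwa [hKeq] at h
    have himg : ⇑s '' D.orbit ({i}ᶜ) a = D.orbit ({i}ᶜ) a := by
      ext x
      constructor
      · rintro ⟨y, ⟨g, hg, rfl⟩, rfl⟩
        exact ⟨s * g, mul_mem hsK hg, rfl⟩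
      · rintro ⟨g, hg, rfl⟩
        refine ⟨(s⁻¹ * g) a, ⟨s⁻¹ * g, mul_mem (inv_mem hsK) hg, rfl⟩, ?_⟩
        show (s * (s⁻¹ * g)) a = g a
        rw [← mul_assoc, mul_inv_cancel, one_mul]
    have hFimg : ⇑s '' D.F a i = D.F a i := by
      show ⇑s '' (convexHull ℝ) (D.orbit ({i}ᶜ) a) = _
      have hcoe : ⇑s = ⇑(s : V →ₗ[ℝ] V) := rfl
      rw [hcoe, LinearMap.image_convexHull, ← hcoe, himg]
      rfl
    rw [hFimg, Set.inter_self]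
  · right
    rw [Set.eq_empty_iff_forall_notMem]
    rintro x ⟨hxF, y, hyF, rfl⟩
    have h1 : ⟪ω, y⟫_ℝ = ⟪ω, a⟫_ℝ := by
      have hsub : D.F a i ⊆ {z | ⟪ω, z⟫_ℝ = ⟪ω, a⟫_ℝ} :=
        convexHull_min hvertex (convex_hyperplane
          ⟨fun u v => inner_add_right _ _ _, fun c u => real_inner_smul_right _ _ _⟩ _)
      exact hsub hyF
    have h2 : ⟪s ω, s y⟫_ℝ < ⟪ω, a⟫_ℝ := by
      have hvert2 : ∀ z ∈ D.orbit ({i}ᶜ) a, ⟪s ω, z⟫_ℝ < ⟪ω, a⟫_ℝ := by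
        rintro z ⟨g, hg, rfl⟩
        have hgW : g ∈ D.W := D.WK_le_W _ hg
        have hq : ⟪s ω, g a⟫_ℝ = ⟪(g⁻¹ * s) ω, a⟫_ℝ := by
          have h3 := D.mem_W_inner (inv_mem hgW) (s ω) (g a)
          have hga : g⁻¹ (g a) = a := by
            show (g⁻¹ * g) a = a
            rw [inv_mul_cancel]
            rfl
          have hgs : g⁻¹ (s ω) = (g⁻¹ * s) ω := rfl
          rw [hga, hgs] at h3
          exact h3.symm
        obtain ⟨hle, heq⟩ := D.orbit_max (D.nn (g⁻¹ * s)) (g⁻¹ * s)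
          (mul_mem (inv_mem hgW) hs) le_rfl a ha ω hωC
        rw [hq]
        rcases hle.lt_or_eq with hlt | heq'
        · exact hlt
        · exfalso
          have h4 : (g⁻¹ * s) ω = ω := heq heq'
          have h5 : s ω = g ω := by
            have := congrArg (⇑g) h4
            show s ω = g ω
            calc s ω = (g * (g⁻¹ * s)) ω := by rw [← mul_assoc, mul_inv_cancel, one_mul]
              _ = g ((g⁻¹ * s) ω) := rfl
              _ = g ω := by rw [h4]
          rw [h5, hfixW g hg] at hcase
          exact hcase rfl
      have hsub : D.F a i ⊆ {z | ⟪s ω, z⟫_ℝ < ⟪ω, a⟫_ℝ} :=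
        convexHull_min hvert2 (convex_halfSpace_lt
          ⟨fun u v => inner_add_right _ _ _, fun c u => real_inner_smul_right _ _ _⟩ _)
      exact hsub hxF
    have h3 : ⟪s ω, s y⟫_ℝ = ⟪ω, y⟫_ℝ := D.mem_W_inner hs ω y
    rw [h3, h1] at h2
    exact lt_irrefl _ h2
end
end

section
/- Let R_I be the root subsystem of a reduced crystallographic root system R spanned by the simple roots {α_i : i ∈ I}, lying in the subspace U = Span{α_i∨ : i ∈ I}, and let π₁ : V → U be the orthogonal projection. Then π₁(P∨) equals the coweight lattice of R_I, where P∨ is the coweight lattice of R. -/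
/-
Pairing with the simple roots `α i`, `i ∈ I`, is unchanged by the orthogonal projection onto
`U = span {α i | i ∈ I}`, so the projection of a coweight is a coweight of `R_I`. Conversely,
since the simple roots form a basis, a coweight `u` of `R_I` extends to a coweight `v` of `R`
with `⟪v, α i⟫ = ⟪u, α i⟫` for `i ∈ I` and `⟪v, α i⟫ = 0` otherwise; then `v - u ⊥ U`, so `u`
is the projection of `v`.
-/

open scoped InnerProductSpace

noncomputable section

section InnerProductSpace

variable {𝕜 E : Type*} [RCLike 𝕜] [NormedAddCommGroup E] [InnerProductSpace 𝕜 E]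

theorem Submodule.mem_orthogonal_span_iff {s : Set E} {x : E} :
    x ∈ (Submodule.span 𝕜 s)ᗮ ↔ ∀ u ∈ s, ⟪u, x⟫_𝕜 = 0 := by
  refine ⟨fun h u hu => h u (Submodule.subset_span hu), fun h u hu => ?_⟩
  have hspan : Submodule.span 𝕜 s ≤ (𝕜 ∙ x)ᗮ :=
    Submodule.span_le.2 fun u hu => Submodule.mem_orthogonal_singleton_iff_inner_left.2 (h u hu)
  exact Submodule.mem_orthogonal_singleton_iff_inner_left.1 (hspan hu)

theorem Submodule.inner_starProjection_eq_of_mem (K : Submodule 𝕜 E) [K.HasOrthogonalProjection]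
    (v : E) {w : E} (hw : w ∈ K) : ⟪K.starProjection v, w⟫_𝕜 = ⟪v, w⟫_𝕜 := by
  have h := K.starProjection_inner_eq_zero v w hw
  rwa [inner_sub_left, sub_eq_zero, eq_comm] at h

theorem Module.Basis.exists_inner_eq [FiniteDimensional 𝕜 E] {ι : Type*} (b : Module.Basis ι 𝕜 E)
    (c : ι → 𝕜) : ∃ v : E, ∀ i, ⟪v, b i⟫_𝕜 = c i := by
  have := FiniteDimensional.complete 𝕜 E
  exact ⟨(InnerProductSpace.toDual 𝕜 E).symm (b.constr 𝕜 c).toContinuousLinearMap, fun i => by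
    simp [InnerProductSpace.toDual_symm_apply]⟩

end InnerProductSpace

namespace RootSystemData

variable {V : Type} [NormedAddCommGroup V] [InnerProductSpace ℝ V] {n : ℕ}

def simpleRootBasis (D : RootSystemData V n) : Module.Basis (Fin n) ℝ V :=
  Module.Basis.mk D.indep D.spanning.ge

theorem exists_inner_simpleRoot_eq [FiniteDimensional ℝ V] (D : RootSystemData V n)
    (c : Fin n → ℝ) : ∃ v : V, ∀ i, ⟪v, D.α i⟫_ℝ = c i := by
  simpa [simpleRootBasis] using D.simpleRootBasis.exists_inner_eq c

end RootSystemData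

/-- The orthogonal projection `π₁` of the coweight lattice `P∨` of `R` onto the subspace
`U = Span{α_i∨ : i ∈ I}` equals the coweight lattice of the root subsystem `R_I`,
i.e. the set of `u ∈ U` with `⟨u, α_i⟩ ∈ ℤ` for all `i ∈ I`. -/
theorem stmt_19 {V : Type} [NormedAddCommGroup V] [InnerProductSpace ℝ V]
    [FiniteDimensional ℝ V] {n : ℕ}
    (D : RootSystemData V n) (I : Set (Fin n)) :
    (fun v : V => (Submodule.orthogonalProjectionOnto (Submodule.span ℝ (D.α '' I)) v : V)) ''
        {v : V | ∀ i, ∃ k : ℤ, ⟪v, D.α i⟫_ℝ = (k : ℝ)}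
      = {u : V | u ∈ Submodule.span ℝ (D.α '' I) ∧ ∀ i ∈ I, ∃ k : ℤ, ⟪u, D.α i⟫_ℝ = (k : ℝ)} := by
  set U := Submodule.span ℝ (D.α '' I)
  simp_rw [← U.starProjection_apply]
  ext u
  constructor
  · rintro ⟨v, hv, rfl⟩
    refine ⟨U.starProjection_apply_mem v, fun i hi => ?_⟩
    rw [U.inner_starProjection_eq_of_mem v (Submodule.subset_span (Set.mem_image_of_mem _ hi))]
    exact hv i
  · rintro ⟨hu, hint⟩
    obtain ⟨v, hv⟩ := D.exists_inner_simpleRoot_eq (I.indicator fun i => ⟪u, D.α i⟫_ℝ)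
    refine ⟨v, fun i => ?_, U.eq_starProjection_of_mem_orthogonal hu ?_⟩
    · by_cases hi : i ∈ I
      · simpa [hv, hi] using hint i hi
      · exact ⟨0, by simp [hv, hi]⟩
    · rw [Submodule.mem_orthogonal_span_iff]
      rintro _ ⟨i, hi, rfl⟩
      simp [inner_sub_right, real_inner_comm, hv, hi]
end
end
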